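/- For real σ > 1 and positive real r, with j a positive integer: ∫_{-∞}^{∞} [σ·cos(t·ln(r/j)) + t·sin(t·ln(r/j))]/(σ² + t²) dt equals 2π·(r/j)^{-σ} if j < r, equals 0 if j > r, and equals π if j = r. -/

import Mathlib

open Real Filter MeasureTheory intervalIntegral
open Complex (I)
open scoped Complex FourierTransform Topology

/-!
With `a = log (r / j)` the integrand is `Re (e^{ita} / (σ + it))`. For `a = 0` it is
`σ / (σ² + t²)`, whose integral over `[-T, T]` is `2 arctan (T / σ) → π`. For `a ≠ 0`, integrating
by parts against `e^{ita} / (ia)` leaves boundary terms of size `O(1 / T)` plus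
`a⁻¹ ∫ e^{ita} / (σ + it)²`, which converges absolutely. Since `(σ + 2πiξ)⁻²` is the Fourier
transform of `s ↦ s e^{-σs} 𝟙_{s > 0}`, Fourier inversion evaluates this integral as
`2π a e^{-σa}` for `a > 0` and `0` for `a < 0`.
-/

section LaplaceTransform

variable {c : ℂ}

lemma norm_cexp_neg_mul_ofReal (c : ℂ) (s : ℝ) : ‖cexp (-(c * s))‖ = Real.exp (-c.re * s) := by
  simp [Complex.norm_exp]

lemma tendsto_cexp_neg_mul_atTop (hc : 0 < c.re) :
    Tendsto (fun s : ℝ => cexp (-(c * s))) atTop (𝓝 0) := by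
  rw [tendsto_zero_iff_norm_tendsto_zero]
  simp_rw [norm_cexp_neg_mul_ofReal]
  exact tendsto_exp_atBot.comp (tendsto_id.const_mul_atTop_of_neg (neg_lt_zero.2 hc))

lemma tendsto_mul_cexp_neg_mul_atTop (hc : 0 < c.re) :
    Tendsto (fun s : ℝ => (s : ℂ) * cexp (-(c * s))) atTop (𝓝 0) := by
  rw [tendsto_zero_iff_norm_tendsto_zero]
  refine (tendsto_rpow_mul_exp_neg_mul_atTop_nhds_zero 1 c.re hc).congr' ?_
  filter_upwards [eventually_ge_atTop 0] with s hs
  rw [norm_mul, norm_cexp_neg_mul_ofReal, Complex.norm_real, norm_of_nonneg hs, rpow_one]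

lemma integrableOn_Ioi_mul_cexp_neg_mul (hc : 0 < c.re) :
    IntegrableOn (fun s : ℝ => (s : ℂ) * cexp (-(c * s))) (Set.Ioi 0) := by
  have h := integrableOn_rpow_mul_exp_neg_mul_rpow (p := 1) (s := 1) (by norm_num) one_pos hc
  refine Integrable.mono' h (by fun_prop) ((ae_restrict_iff' measurableSet_Ioi).2 ?_)
  filter_upwards with s (hs : 0 < s)
  rw [norm_mul, norm_cexp_neg_mul_ofReal, Complex.norm_real, norm_of_nonneg hs.le, rpow_one]

lemma integral_Ioi_mul_cexp_neg_mul (hc : 0 < c.re) :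
    ∫ s : ℝ in Set.Ioi 0, (s : ℂ) * cexp (-(c * s)) = (c ^ 2)⁻¹ := by
  have hc0 : c ≠ 0 := fun h => by simp [h] at hc
  have hderiv (s : ℝ) : HasDerivAt (fun s : ℝ => -((s : ℂ) / c + (c ^ 2)⁻¹) * cexp (-(c * s)))
      ((s : ℂ) * cexp (-(c * s))) s := by
    have := ((((hasDerivAt_id (s : ℂ)).div_const c).add_const (c ^ 2)⁻¹).neg.mul
      ((hasDerivAt_id (s : ℂ)).const_mul c).neg.cexp).comp_ofReal
    refine this.congr_deriv ?_
    simp only [id, Pi.neg_apply]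
    field_simp
    ring
  have hlim : Tendsto (fun s : ℝ => -((s : ℂ) / c + (c ^ 2)⁻¹) * cexp (-(c * s))) atTop (𝓝 0) := by
    have := ((tendsto_mul_cexp_neg_mul_atTop hc).const_mul (-c⁻¹)).sub
      ((tendsto_cexp_neg_mul_atTop hc).const_mul (c ^ 2)⁻¹)
    simp only [mul_zero, sub_zero] at this
    refine this.congr fun s => ?_
    ring
  rw [integral_Ioi_of_hasDerivAt_of_tendsto' (fun s _ => hderiv s)
    (integrableOn_Ioi_mul_cexp_neg_mul hc) hlim]
  simp

end LaplaceTransform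

noncomputable def rampDecay (σ s : ℝ) : ℂ := ↑(max s 0 * Real.exp (-σ * max s 0))

section RampDecay

variable {σ : ℝ}

lemma continuous_rampDecay (σ : ℝ) : Continuous (rampDecay σ) := by
  unfold rampDecay; fun_prop

lemma rampDecay_of_nonpos {s : ℝ} (hs : s ≤ 0) : rampDecay σ s = 0 := by
  simp [rampDecay, max_eq_right hs]

lemma rampDecay_of_nonneg {s : ℝ} (hs : 0 ≤ s) : rampDecay σ s = ↑(s * Real.exp (-σ * s)) := by
  simp [rampDecay, max_eq_left hs]

lemma rampDecay_eq_indicator (σ : ℝ) :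
    rampDecay σ = (Set.Ioi 0).indicator fun s : ℝ => (s : ℂ) * cexp (-((σ : ℂ) * s)) := by
  ext s
  by_cases hs : s ∈ Set.Ioi 0
  · rw [Set.indicator_of_mem hs, rampDecay_of_nonneg (le_of_lt hs)]
    push_cast
    ring_nf
  · rw [Set.indicator_of_notMem hs, rampDecay_of_nonpos (not_lt.1 hs)]

lemma integrable_rampDecay (hσ : 0 < σ) : Integrable (rampDecay σ) := by
  rw [rampDecay_eq_indicator, integrable_indicator_iff measurableSet_Ioi]
  exact integrableOn_Ioi_mul_cexp_neg_mul (c := σ) (by simpa using hσ)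

lemma fourier_rampDecay (hσ : 0 < σ) (ξ : ℝ) :
    𝓕 (rampDecay σ) ξ = (((σ : ℂ) + ↑(2 * π * ξ) * I) ^ 2)⁻¹ := by
  have hre : 0 < ((σ : ℂ) + ↑(2 * π * ξ) * I).re := by simpa using hσ
  rw [fourier_real_eq_integral_exp_smul, ← integral_Ioi_mul_cexp_neg_mul hre,
    rampDecay_eq_indicator, ← MeasureTheory.integral_indicator measurableSet_Ioi]
  congr 1 with v
  by_cases hv : v ∈ Set.Ioi 0
  · rw [Set.indicator_of_mem hv, Set.indicator_of_mem hv, smul_eq_mul, mul_left_comm,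
      ← Complex.exp_add]
    push_cast
    ring_nf
  · simp [Set.indicator_of_notMem hv]

end RampDecay

section Integrability

variable {σ : ℝ}

lemma ofReal_add_mul_I_ne_zero (hσ : σ ≠ 0) (t : ℝ) : (σ : ℂ) + t * I ≠ 0 := fun h =>
  hσ (by simpa using congrArg Complex.re h)

lemma sq_norm_ofReal_add_mul_I (σ t : ℝ) : ‖(σ : ℂ) + t * I‖ ^ 2 = σ ^ 2 + t ^ 2 := by
  rw [Complex.sq_norm, Complex.normSq_add_mul_I]

lemma integrable_inv_sq_add_sq (hσ : σ ≠ 0) : Integrable fun t : ℝ => (σ ^ 2 + t ^ 2)⁻¹ := by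
  refine ((integrable_inv_one_add_sq.comp_div hσ).const_mul (σ ^ 2)⁻¹).congr
    (Eventually.of_forall fun t => ?_)
  field_simp

lemma integrable_cexp_div_ofReal_add_mul_I_sq (hσ : σ ≠ 0) (a : ℝ) :
    Integrable fun t : ℝ => cexp (↑(t * a) * I) / ((σ : ℂ) + t * I) ^ 2 := by
  refine (integrable_inv_sq_add_sq hσ).mono' ?_ (Eventually.of_forall fun t => ?_)
  · exact (Continuous.div (by fun_prop) (by fun_prop)
      fun t => pow_ne_zero 2 (ofReal_add_mul_I_ne_zero hσ t)).aestronglyMeasurable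
  · rw [norm_div, Complex.norm_exp_ofReal_mul_I, norm_pow, sq_norm_ofReal_add_mul_I, one_div]

lemma integrable_inv_ofReal_add_mul_I_sq (hσ : σ ≠ 0) :
    Integrable fun t : ℝ => (((σ : ℂ) + t * I) ^ 2)⁻¹ := by
  simpa using integrable_cexp_div_ofReal_add_mul_I_sq hσ 0

end Integrability

lemma integral_cexp_div_ofReal_add_mul_I_sq {σ : ℝ} (hσ : 0 < σ) (a : ℝ) :
    ∫ t : ℝ, cexp (↑(t * a) * I) / ((σ : ℂ) + t * I) ^ 2 = 2 * π * rampDecay σ a := by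
  set ψ : ℝ → ℂ := fun t => cexp (↑(t * a) * I) / ((σ : ℂ) + t * I) ^ 2
  have hFourier : Integrable (𝓕 (rampDecay σ)) := by
    simpa only [funext (fourier_rampDecay hσ), Complex.ofReal_mul] using
      (integrable_inv_ofReal_add_mul_I_sq hσ.ne').comp_mul_left' (by positivity : 2 * π ≠ 0)
  have hinv : ∫ ξ : ℝ, ψ (2 * π * ξ) = rampDecay σ a := by
    rw [← congrFun ((continuous_rampDecay σ).fourierInv_fourier_eq (integrable_rampDecay hσ)
      hFourier) a, fourierInv_eq']
    congr 1 with ξ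
    rw [fourier_rampDecay hσ, smul_eq_mul, Real.inner_apply]
    simp only [ψ, div_eq_mul_inv]
    ring_nf
  rw [Measure.integral_comp_mul_left ψ (2 * π), abs_of_pos (by positivity)] at hinv
  rw [← hinv, Complex.real_smul]
  push_cast
  field_simp

section IntegrationByParts

variable {σ a : ℝ}

lemma integral_cexp_div_ofReal_add_mul_I (hσ : σ ≠ 0) (ha : a ≠ 0) (T : ℝ) :
    ∫ t in -T..T, cexp (↑(t * a) * I) / ((σ : ℂ) + t * I) =
      cexp (↑(T * a) * I) / (a * I * ((σ : ℂ) + T * I)) -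
        cexp (↑(-T * a) * I) / (a * I * ((σ : ℂ) + ↑(-T) * I)) +
      (a : ℂ)⁻¹ * ∫ t in -T..T, cexp (↑(t * a) * I) / ((σ : ℂ) + t * I) ^ 2 := by
  have hne := ofReal_add_mul_I_ne_zero hσ
  have ha' : (a : ℂ) ≠ 0 := by exact_mod_cast ha
  have hu (t : ℝ) : HasDerivAt (fun t : ℝ => ((σ : ℂ) + t * I)⁻¹)
      (-I / ((σ : ℂ) + t * I) ^ 2) t := by
    have := (((hasDerivAt_id (t : ℂ)).mul_const I).const_add (σ : ℂ)).inv (hne t)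
    simpa using this.comp_ofReal
  have hv (t : ℝ) : HasDerivAt (fun t : ℝ => cexp (↑(t * a) * I) / (a * I))
      (cexp (↑(t * a) * I)) t := by
    have := ((((hasDerivAt_id t).mul_const a).ofReal_comp.mul_const I).cexp).div_const ((a : ℂ) * I)
    refine this.congr_deriv ?_
    simp only [id, one_mul]
    field_simp
  have hibp := integral_mul_deriv_eq_deriv_mul (a := -T) (b := T)
    (fun t _ => hu t) (fun t _ => hv t)
    ((Continuous.div (by fun_prop) (by fun_prop)
      fun t => pow_ne_zero 2 (hne t)).intervalIntegrable _ _)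
    (by apply Continuous.intervalIntegrable; fun_prop)
  have hrest : ∫ t in -T..T, -I / ((σ : ℂ) + t * I) ^ 2 * (cexp (↑(t * a) * I) / (a * I)) =
      -((a : ℂ)⁻¹ * ∫ t in -T..T, cexp (↑(t * a) * I) / ((σ : ℂ) + t * I) ^ 2) := by
    rw [← intervalIntegral.integral_const_mul, ← intervalIntegral.integral_neg]
    congr 1 with t
    field_simp
  simp only [← div_eq_inv_mul] at hibp
  rw [hibp, hrest]
  field_simp
  ring

end IntegrationByParts

lemma norm_cexp_div_mul_I_ofReal_add_mul_I_le (σ a : ℝ) {T : ℝ} (hT : T ≠ 0) :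
    ‖cexp (↑(T * a) * I) / (a * I * ((σ : ℂ) + T * I))‖ ≤ |a|⁻¹ * |T|⁻¹ := by
  rw [norm_div, Complex.norm_exp_ofReal_mul_I, norm_mul, norm_mul, Complex.norm_I, mul_one,
    Complex.norm_real, norm_eq_abs, one_div, mul_inv]
  have := abs_pos.2 hT
  gcongr
  simpa using Complex.abs_im_le_norm ((σ : ℂ) + T * I)

lemma tendsto_integral_cexp_div_ofReal_add_mul_I {σ a : ℝ} (hσ : 0 < σ) (ha : a ≠ 0) :
    Tendsto (fun T : ℝ => ∫ t in -T..T, cexp (↑(t * a) * I) / ((σ : ℂ) + t * I)) atTop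
      (𝓝 (2 * π * a⁻¹ * rampDecay σ a)) := by
  have hbound : Tendsto (fun T : ℝ => |a|⁻¹ * |T|⁻¹) atTop (𝓝 0) := by
    simpa using (tendsto_inv_atTop_zero.comp tendsto_abs_atTop_atTop).const_mul |a|⁻¹
  have hupper : Tendsto (fun T : ℝ => cexp (↑(T * a) * I) / (a * I * ((σ : ℂ) + T * I))) atTop
      (𝓝 0) := squeeze_zero_norm' ((eventually_gt_atTop 0).mono fun T hT =>
        norm_cexp_div_mul_I_ofReal_add_mul_I_le σ a hT.ne') hbound
  have hlower : Tendsto (fun T : ℝ => cexp (↑(-T * a) * I) / (a * I * ((σ : ℂ) + ↑(-T) * I)))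
      atTop (𝓝 0) := squeeze_zero_norm' ((eventually_gt_atTop 0).mono fun T hT => by
        simpa only [abs_neg] using
          norm_cexp_div_mul_I_ofReal_add_mul_I_le σ a (neg_ne_zero.2 hT.ne')) hbound
  have hψ := intervalIntegral_tendsto_integral (integrable_cexp_div_ofReal_add_mul_I_sq hσ.ne' a)
    tendsto_neg_atTop_atBot tendsto_id
  rw [integral_cexp_div_ofReal_add_mul_I_sq hσ] at hψ
  refine Tendsto.congr (fun T => (integral_cexp_div_ofReal_add_mul_I hσ.ne' ha T).symm) ?_
  rw [show (2 * π * a⁻¹ * rampDecay σ a : ℂ) = 0 - 0 + (a : ℂ)⁻¹ * (2 * π * rampDecay σ a) by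
    push_cast; ring]
  exact (hupper.sub hlower).add (hψ.const_mul (a : ℂ)⁻¹)

section RealIntegrand

variable {σ a : ℝ}

lemma re_cexp_div_ofReal_add_mul_I (σ a t : ℝ) :
    (cexp (↑(t * a) * I) / ((σ : ℂ) + t * I)).re =
      (σ * Real.cos (t * a) + t * Real.sin (t * a)) / (σ ^ 2 + t ^ 2) := by
  rw [Complex.div_re, Complex.normSq_add_mul_I, Complex.exp_ofReal_mul_I_re,
    Complex.exp_ofReal_mul_I_im]
  simp only [Complex.add_re, Complex.add_im, Complex.ofReal_re, Complex.ofReal_im,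
    Complex.mul_re, Complex.mul_im, Complex.I_re, Complex.I_im]
  ring

lemma tendsto_integral_cos_sin_div_of_ne_zero (hσ : 0 < σ) (ha : a ≠ 0) :
    Tendsto (fun T : ℝ => ∫ t in -T..T,
        (σ * Real.cos (t * a) + t * Real.sin (t * a)) / (σ ^ 2 + t ^ 2)) atTop
      (𝓝 (2 * π * a⁻¹ * (rampDecay σ a).re)) := by
  have hcont : Continuous fun t : ℝ => cexp (↑(t * a) * I) / ((σ : ℂ) + t * I) :=
    Continuous.div (by fun_prop) (by fun_prop) (ofReal_add_mul_I_ne_zero hσ.ne')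
  have hre := (Complex.continuous_re.tendsto _).comp
    (tendsto_integral_cexp_div_ofReal_add_mul_I hσ ha)
  have hval : (2 * π * a⁻¹ * rampDecay σ a : ℂ).re = 2 * π * a⁻¹ * (rampDecay σ a).re := by
    simp
  rw [hval] at hre
  refine Tendsto.congr (fun T => ?_) hre
  simp only [Function.comp_apply, ← re_cexp_div_ofReal_add_mul_I]
  exact (Complex.reCLM.intervalIntegral_comp_comm (hcont.intervalIntegrable (μ := volume) _ _)).symm

lemma tendsto_integral_cos_sin_div_of_pos (hσ : 0 < σ) (ha : 0 < a) :
    Tendsto (fun T : ℝ => ∫ t in -T..T,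
        (σ * Real.cos (t * a) + t * Real.sin (t * a)) / (σ ^ 2 + t ^ 2)) atTop
      (𝓝 (2 * π * Real.exp (-σ * a))) := by
  convert tendsto_integral_cos_sin_div_of_ne_zero hσ ha.ne' using 2
  rw [rampDecay_of_nonneg ha.le, Complex.ofReal_re]
  field_simp

lemma tendsto_integral_cos_sin_div_of_neg (hσ : 0 < σ) (ha : a < 0) :
    Tendsto (fun T : ℝ => ∫ t in -T..T,
        (σ * Real.cos (t * a) + t * Real.sin (t * a)) / (σ ^ 2 + t ^ 2)) atTop (𝓝 0) := by
  convert tendsto_integral_cos_sin_div_of_ne_zero hσ ha.ne using 2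
  simp [rampDecay_of_nonpos ha.le]

end RealIntegrand

lemma tendsto_integral_div_sq_add_sq {σ : ℝ} (hσ : 0 < σ) :
    Tendsto (fun T : ℝ => ∫ t in -T..T, σ / (σ ^ 2 + t ^ 2)) atTop (𝓝 π) := by
  simp_rw [integral_div_sq_add_sq, neg_div, arctan_neg, sub_neg_eq_add, ← two_mul]
  have h := ((tendsto_arctan_atTop.mono_right nhdsWithin_le_nhds).comp
    (tendsto_id.atTop_div_const hσ)).const_mul 2
  rwa [mul_div_cancel₀ _ two_ne_zero] at h

theorem stmt_14 (σ r : ℝ) (hσ : 1 < σ) (hr : 0 < r) (j : ℕ) (hj : 0 < j) :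
    ((j : ℝ) < r →
      Tendsto (fun T : ℝ =>
          ∫ t in (-T)..T,
            (σ * Real.cos (t * Real.log (r / j)) + t * Real.sin (t * Real.log (r / j))) /
              (σ ^ 2 + t ^ 2))
        atTop (nhds (2 * Real.pi * (r / j) ^ (-σ)))) ∧
    (r < (j : ℝ) →
      Tendsto (fun T : ℝ =>
          ∫ t in (-T)..T,
            (σ * Real.cos (t * Real.log (r / j)) + t * Real.sin (t * Real.log (r / j))) /
              (σ ^ 2 + t ^ 2))
        atTop (nhds 0)) ∧
    ((j : ℝ) = r →
      Tendsto (fun T : ℝ =>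
          ∫ t in (-T)..T,
            (σ * Real.cos (t * Real.log (r / j)) + t * Real.sin (t * Real.log (r / j))) /
              (σ ^ 2 + t ^ 2))
        atTop (nhds Real.pi)) := by
  have hσ0 : 0 < σ := one_pos.trans hσ
  have hj0 : (0 : ℝ) < j := Nat.cast_pos.2 hj
  have hrj : 0 < r / j := div_pos hr hj0
  refine ⟨fun hlt => ?_, fun hgt => ?_, fun heq => ?_⟩
  · rw [rpow_def_of_pos hrj, mul_comm (log _)]
    exact tendsto_integral_cos_sin_div_of_pos hσ0 (log_pos ((one_lt_div hj0).2 hlt))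
  · exact tendsto_integral_cos_sin_div_of_neg hσ0 (log_neg hrj ((div_lt_one hj0).2 hgt))
  · simp only [← heq, div_self hj0.ne', log_one, mul_zero, cos_zero, sin_zero, mul_one, add_zero]
    exact tendsto_integral_div_sq_add_sq hσ0
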